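/- arXiv:1906.10086 — 5 statements merged into one kernel-verified Lean document; each statement's English description precedes it below -/
import Mathlib

section
/- In the one-dimensional split framework, suppose Assumption (Q) holds with increasing bijections q₁, q₂ : [0,1] → [0,1]. Let Λ ∈ (0,1] and let s* ∈ [a,b] satisfy 4·P(s*)·(1 − P(s*)) ≥ Λ. Set Ψ = 1 − √(1 − Λ) and Γ = 2·min{q₁(Ψ/2), 1 − q₂(1 − Ψ/2)}. Then Q(Ψ/2) ≤ s* ≤ Q(1 − Ψ/2); moreover a + (b − a)·q₁(Ψ/2) ≤ s* ≤ b − (b − a)·(1 − q₂(1 − Ψ/2)), and |s* − (a+b)/2| ≤ ((b − a)/2)·(1 − Γ). -/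
open MeasureTheory Set

noncomputable section

/-- Under Assumption (Q), any split point `s* ∈ [a,b]` with
`4P(s*)(1−P(s*)) ≥ Λ` satisfies `Q(Ψ/2) ≤ s* ≤ Q(1−Ψ/2)`, hence
`a + (b−a)q₁(Ψ/2) ≤ s* ≤ b − (b−a)(1 − q₂(1−Ψ/2))` and
`|s* − (a+b)/2| ≤ ((b−a)/2)(1−Γ)`, where `Ψ = 1 − √(1−Λ)` and
`Γ = 2 min{q₁(Ψ/2), 1 − q₂(1−Ψ/2)}`. -/
theorem split_distance_to_edges
    (a b : ℝ) (hab : a < b)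
    (p g : ℝ → ℝ)
    (hp_cont : ContinuousOn p (Set.Icc a b))
    (hp_pos : ∀ u ∈ Set.Icc a b, 0 < p u)
    (hp_one : (∫ u in a..b, p u) = 1)
    (hg_cont : ContinuousOn g (Set.Icc a b))
    (P Q : ℝ → ℝ)
    (hP : ∀ s, P s = ∫ u in a..s, p u)
    (hQ : ∀ q, Q q = sInf {s | s ∈ Set.Icc a b ∧ q ≤ P s})
    (q₁ q₂ : ℝ → ℝ)
    (hq₁_mono : StrictMonoOn q₁ (Set.Icc 0 1))
    (hq₁_bij : Set.BijOn q₁ (Set.Icc 0 1) (Set.Icc 0 1))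
    (hq₂_mono : StrictMonoOn q₂ (Set.Icc 0 1))
    (hq₂_bij : Set.BijOn q₂ (Set.Icc 0 1) (Set.Icc 0 1))
    (hQbounds : ∀ q ∈ Set.Icc (0 : ℝ) 1,
      q₁ q ≤ (Q q - a) / (b - a) ∧ (Q q - a) / (b - a) ≤ q₂ q)
    (Λ : ℝ) (hΛ : Λ ∈ Set.Ioc (0 : ℝ) 1)
    (sstar : ℝ) (hmem : sstar ∈ Set.Icc a b)
    (hbal : Λ ≤ 4 * P sstar * (1 - P sstar))
    (Ψ Γ : ℝ)
    (hΨ : Ψ = 1 - Real.sqrt (1 - Λ))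
    (hΓ : Γ = 2 * min (q₁ (Ψ / 2)) (1 - q₂ (1 - Ψ / 2))) :
    (Q (Ψ / 2) ≤ sstar ∧ sstar ≤ Q (1 - Ψ / 2)) ∧
    (a + (b - a) * q₁ (Ψ / 2) ≤ sstar ∧ sstar ≤ b - (b - a) * (1 - q₂ (1 - Ψ / 2))) ∧
    |sstar - (a + b) / 2| ≤ (b - a) / 2 * (1 - Γ) := by

  obtain ⟨ha, hb⟩ := hmem
  have hba : (0:ℝ) < b - a := by linarith
  have hint : ∀ x ∈ Set.Icc a b, ∀ y ∈ Set.Icc a b,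
      IntervalIntegrable p MeasureTheory.volume x y := by
    intro x hx y hy
    exact (hp_cont.mono (Set.uIcc_subset_Icc hx hy)).intervalIntegrable
  have haI : a ∈ Set.Icc a b := ⟨le_rfl, hab.le⟩
  have hPab : ∀ x ∈ Set.Icc a b, ∀ y ∈ Set.Icc a b, x < y → P x < P y := by
    intro x hx y hy hxy
    have h1 : P x + ∫ u in x..y, p u = P y := by
      rw [hP, hP]
      exact intervalIntegral.integral_add_adjacent_intervals (hint a haI x hx) (hint x hx y hy)
    have h2 : 0 < ∫ u in x..y, p u := by
      apply intervalIntegral.intervalIntegral_pos_of_pos_on (hint x hx y hy) _ hxy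
      intro z hz
      exact hp_pos z ⟨le_trans hx.1 hz.1.le, le_trans hz.2.le hy.2⟩
    linarith
  have hPb : P b = 1 := by rw [hP]; exact hp_one
  have h1Λ : (0:ℝ) ≤ 1 - Λ := by linarith [hΛ.2]
  have hsq : Real.sqrt (1 - Λ) ^ 2 = 1 - Λ := Real.sq_sqrt h1Λ
  have hsnn : 0 ≤ Real.sqrt (1 - Λ) := Real.sqrt_nonneg _
  have hsqlt : Real.sqrt (1 - Λ) < 1 := by nlinarith [hΛ.1]
  have hΨpos : 0 < Ψ := by rw [hΨ]; linarith
  have hΨle : Ψ ≤ 1 := by rw [hΨ]; linarith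
  have hx1 : Ψ / 2 ≤ P sstar := by
    rw [hΨ]
    nlinarith [sq_nonneg (Real.sqrt (1 - Λ) + 2 * P sstar - 1)]
  have hx2 : P sstar ≤ 1 - Ψ / 2 := by
    rw [hΨ]
    nlinarith [sq_nonneg (Real.sqrt (1 - Λ) - 2 * P sstar + 1)]
  have hmem1 : Q (Ψ / 2) ≤ sstar := by
    rw [hQ]
    exact csInf_le ⟨a, fun s hs => hs.1.1⟩ ⟨⟨ha, hb⟩, hx1⟩
  have hmem2 : sstar ≤ Q (1 - Ψ / 2) := by
    rw [hQ]
    have hne : {s | s ∈ Set.Icc a b ∧ 1 - Ψ / 2 ≤ P s}.Nonempty :=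
      ⟨b, ⟨hab.le, le_rfl⟩, by rw [hPb]; linarith⟩
    apply le_csInf hne
    intro s hs
    by_contra h
    push_neg at h
    have := hPab s hs.1 sstar ⟨ha, hb⟩ h
    have := hs.2
    linarith
  have hb1 := (hQbounds (Ψ / 2) ⟨by linarith, by linarith⟩).1
  have hb2 := (hQbounds (1 - Ψ / 2) ⟨by linarith, by linarith⟩).2
  have e1 : a + (b - a) * q₁ (Ψ / 2) ≤ Q (Ψ / 2) := by
    have := (le_div_iff₀ hba).mp hb1
    linarith
  have e2 : Q (1 - Ψ / 2) ≤ a + (b - a) * q₂ (1 - Ψ / 2) := by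
    have := (div_le_iff₀ hba).mp hb2
    linarith
  have f1 : a + (b - a) * q₁ (Ψ / 2) ≤ sstar := le_trans e1 hmem1
  have f2 : sstar ≤ b - (b - a) * (1 - q₂ (1 - Ψ / 2)) := by
    have := le_trans hmem2 e2
    linarith [this]
  refine ⟨⟨hmem1, hmem2⟩, ⟨f1, f2⟩, ?_⟩
  have m1 : min (q₁ (Ψ / 2)) (1 - q₂ (1 - Ψ / 2)) ≤ q₁ (Ψ / 2) := min_le_left _ _
  have m2 : min (q₁ (Ψ / 2)) (1 - q₂ (1 - Ψ / 2)) ≤ 1 - q₂ (1 - Ψ / 2) := min_le_right _ _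
  rw [abs_le]
  constructor <;> nlinarith [f1, f2, hΓ, hba]
end
end

section
/- In the one-dimensional split framework, suppose Assumption (Q) holds, let Λ ∈ (0,1], and assume every best split s* satisfies 4·P(s*)·(1 − P(s*)) ≥ Λ. Set Ψ = 1 − √(1 − Λ), Γ = 2·min{q₁(Ψ/2), 1 − q₂(1 − Ψ/2)}, p_L = q₂^{-1}(Γ²/2), p_R = 1 − q₁^{-1}(1 − Γ²/2), and p̄ = min{p_L, p_R}. Let δ ∈ [0,1], let ŝ be a random variable such that with probability at least 1 − δ the distance from ŝ to the set S* of best splits is at most ((b − a)/2)·Γ·(1 − Γ). Then: (i) with probability at least 1 − δ, a + ((b − a)/2)·Γ² ≤ ŝ ≤ b − ((b − a)/2)·Γ²; and (ii) if moreover W_1, …, W_N are i.i.d. random variables (on the same probability space) taking values in [a,b] with ℙ(W_i ≤ s) = P(s) for all s ∈ [a,b], then with probability at least 1 − δ − 2·exp(−N·p̄²/2), #{i ≤ N : W_i ≤ ŝ} ≥ N·p_L/2 and #{i ≤ N : W_i > ŝ} ≥ N·p_R/2. -/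
/-!
Since `Δ` is continuous on `[a, b]` (at the edges because `|Ξ| ≤ C · min (P, 1 - P)`), best
splits exist. A `Λ`-balanced best split has `|2 P(s*) - 1| ≤ √(1 - Λ)`, i.e.
`P(s*) ∈ [Ψ/2, 1 - Ψ/2]`, and inverting `P` through the quantile function and Assumption (Q)
places `s*` at distance at least `((b - a)/2) Γ` from both edges. An `ŝ` within
`((b - a)/2) Γ (1 - Γ)` of `S*` is therefore at distance `((b - a)/2) Γ²` from the edges, which
is (i). At these two points (Q) bounds the mass to the left below by `p_L` and the mass to the
right below by `p_R`, so Hoeffding's inequality for the two counts and a union bound with the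
event of (i) give (ii).
-/

open MeasureTheory Set ProbabilityTheory
open scoped Finset

noncomputable section

theorem continuousOn_primitive_Icc {a b : ℝ} {f : ℝ → ℝ} (hab : a ≤ b)
    (hf : ContinuousOn f (Icc a b)) : ContinuousOn (fun s => ∫ u in a..s, f u) (Icc a b) := by
  have := intervalIntegral.continuousOn_primitive_interval (μ := volume)
    (hf.integrableOn_Icc.mono_set (uIcc_of_le hab).subset)
  rwa [uIcc_of_le hab] at this

/-- The bound uses `max t (1 - t) ≥ 1 / 2`. -/
theorem abs_sq_div_mul_one_sub_le {x t C : ℝ} (h₀ : |x| ≤ C * t)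
    (h₁ : |x| ≤ C * (1 - t)) : |x ^ 2 / (t * (1 - t))| ≤ 2 * C * |x| := by
  rw [abs_div, abs_mul, abs_of_nonneg (sq_nonneg x)]
  rcases eq_or_ne x 0 with rfl | hx
  · simp
  have hx' := abs_pos.2 hx
  have hC : 0 < C := by nlinarith
  have ht₀ : 0 < t := by nlinarith
  have ht₁ : 0 < 1 - t := by nlinarith
  rw [abs_of_pos ht₀, abs_of_pos ht₁, div_le_iff₀ (by positivity)]
  rcases le_total t (1 / 2) with ht | ht
  · nlinarith [sq_abs x, mul_le_mul_of_nonneg_left h₀ hx'.le, mul_nonneg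
      (mul_nonneg (mul_nonneg hC.le hx'.le) ht₀.le) (by linarith : (0 : ℝ) ≤ 1 / 2 - t)]
  · nlinarith [sq_abs x, mul_le_mul_of_nonneg_left h₁ hx'.le, mul_nonneg
      (mul_nonneg (mul_nonneg hC.le hx'.le) ht₁.le) (by linarith : (0 : ℝ) ≤ t - 1 / 2)]

theorem ContinuousOn.sq_div_mul_one_sub {α : Type*} [TopologicalSpace α] {X P : α → ℝ}
    {S : Set α} {C : ℝ} (hX : ContinuousOn X S) (hP : ContinuousOn P S)
    (h₀ : ∀ y ∈ S, |X y| ≤ C * P y) (h₁ : ∀ y ∈ S, |X y| ≤ C * (1 - P y)) :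
    ContinuousOn (fun y => X y ^ 2 / (P y * (1 - P y))) S := by
  intro x hx
  by_cases hden : P x * (1 - P x) = 0
  · have hXx : X x = 0 := by
      rcases mul_eq_zero.1 hden with h | h
      · simpa [h] using h₀ x hx
      · simpa [h] using h₁ x hx
    have hbound : ContinuousWithinAt (fun y => 2 * C * |X y|) S x :=
      continuousWithinAt_const.mul (hX x hx).abs
    rw [ContinuousWithinAt, hXx, abs_zero, mul_zero] at hbound
    rw [ContinuousWithinAt, hden, div_zero]
    refine squeeze_zero_norm' ?_ hbound
    filter_upwards [self_mem_nhdsWithin] with y hy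
    exact abs_sq_div_mul_one_sub_le (h₀ y hy) (h₁ y hy)
  · exact ((hX x hx).pow 2).div ((hP x hx).mul (continuousWithinAt_const.sub (hP x hx))) hden

theorem abs_two_mul_sub_one_le_sqrt {x Λ : ℝ} (h : Λ ≤ 4 * x * (1 - x)) :
    |2 * x - 1| ≤ √(1 - Λ) :=
  Real.abs_le_sqrt (by nlinarith)

theorem one_sub_sqrt_one_sub_div_two_mem_Icc {Λ : ℝ} (hΛ : 0 ≤ Λ) :
    (1 - √(1 - Λ)) / 2 ∈ Icc (0 : ℝ) (1 / 2) := by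
  have := Real.sqrt_le_one.2 (by linarith : 1 - Λ ≤ 1)
  constructor <;> linarith [Real.sqrt_nonneg (1 - Λ)]

theorem mem_Icc_of_infDist_le {S : Set ℝ} {x l u r : ℝ} (hS : S.Nonempty) (hSI : S ⊆ Icc l u)
    (h : Metric.infDist x S ≤ r) : x ∈ Icc (l - r) (u + r) := by
  have hl : l - x ≤ Metric.infDist x S := (Metric.le_infDist hS).2 fun y hy => by
    rw [Real.dist_eq]; linarith [(hSI hy).1, neg_abs_le (x - y)]
  have hu : x - u ≤ Metric.infDist x S := (Metric.le_infDist hS).2 fun y hy => by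
    rw [Real.dist_eq]; linarith [(hSI hy).2, le_abs_self (x - y)]
  constructor <;> linarith

structure IsStrictCDF (P : ℝ → ℝ) (a b : ℝ) : Prop where
  lt : a < b
  continuousOn : ContinuousOn P (Icc a b)
  strictMonoOn : StrictMonoOn P (Icc a b)
  apply_left : P a = 0
  apply_right : P b = 1

theorem IsStrictCDF.of_density {a b : ℝ} {p P : ℝ → ℝ} (hab : a < b)
    (hp : ContinuousOn p (Icc a b)) (hp_pos : ∀ u ∈ Icc a b, 0 < p u)
    (hp_one : ∫ u in a..b, p u = 1)
    (hP : ∀ s, P s = ∫ u in a..s, p u) : IsStrictCDF P a b where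
  lt := hab
  continuousOn := (continuousOn_primitive_Icc hab.le hp).congr fun s _ => hP s
  strictMonoOn s hs t ht hst := by
    have hint : ∀ x ∈ Icc a b, ∀ y ∈ Icc a b, IntervalIntegrable p volume x y :=
      fun x hx y hy => (hp.mono (uIcc_subset_Icc hx hy)).intervalIntegrable
    have ha : a ∈ Icc a b := left_mem_Icc.2 hab.le
    rw [hP, hP, ← sub_pos,
      intervalIntegral.integral_interval_sub_left (hint a ha t ht) (hint a ha s hs)]
    exact intervalIntegral.intervalIntegral_pos_of_pos_on (hint s hs t ht)
      (fun x hx => hp_pos x ⟨hs.1.trans hx.1.le, hx.2.le.trans ht.2⟩) hst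
  apply_left := by simp [hP]
  apply_right := by rw [hP, hp_one]

def quantile (P : ℝ → ℝ) (a b q : ℝ) : ℝ := sInf {s | s ∈ Icc a b ∧ q ≤ P s}

namespace IsStrictCDF

variable {a b q s : ℝ} {P : ℝ → ℝ}

theorem quantile_mem (hP : IsStrictCDF P a b) (hq : q ≤ 1) :
    quantile P a b q ∈ Icc a b ∧ q ≤ P (quantile P a b q) :=
  IsClosed.csInf_mem (hP.continuousOn.preimage_isClosed_of_isClosed isClosed_Icc isClosed_Ici)
    ⟨b, right_mem_Icc.2 hP.lt.le, (hP.apply_right ▸ hq : q ≤ P b)⟩ ⟨a, fun _ hs => hs.1.1⟩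

theorem apply_quantile (hP : IsStrictCDF P a b) (hq : q ∈ Icc 0 1) :
    P (quantile P a b q) = q := by
  obtain ⟨hQ, hqQ⟩ := hP.quantile_mem hq.2
  obtain ⟨s, hs, hPs⟩ : ∃ s ∈ Icc a b, P s = q := by
    have := intermediate_value_Icc hP.lt.le hP.continuousOn
    rw [hP.apply_left, hP.apply_right] at this
    exact this hq
  have hQs : quantile P a b q ≤ s := csInf_le ⟨a, fun _ hs => hs.1.1⟩ ⟨hs, hPs.ge⟩
  exact le_antisymm (hPs ▸ hP.strictMonoOn.monotoneOn hQ hs hQs) hqQ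

theorem quantile_le_iff (hP : IsStrictCDF P a b) (hq : q ∈ Icc 0 1) (hs : s ∈ Icc a b) :
    quantile P a b q ≤ s ↔ q ≤ P s := by
  rw [← hP.strictMonoOn.le_iff_le (hP.quantile_mem hq.2).1 hs, hP.apply_quantile hq]

theorem le_quantile_iff (hP : IsStrictCDF P a b) (hq : q ∈ Icc 0 1) (hs : s ∈ Icc a b) :
    s ≤ quantile P a b q ↔ P s ≤ q := by
  rw [← hP.strictMonoOn.le_iff_le hs (hP.quantile_mem hq.2).1, hP.apply_quantile hq]

end IsStrictCDF

/-- Assumption (Q). -/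
def QuantileSandwich (P : ℝ → ℝ) (a b : ℝ) (q₁ q₂ : ℝ → ℝ) : Prop :=
  ∀ q ∈ Icc (0 : ℝ) 1,
    q₁ q ≤ (quantile P a b q - a) / (b - a) ∧ (quantile P a b q - a) / (b - a) ≤ q₂ q

namespace QuantileSandwich

variable {a b q s : ℝ} {P q₁ q₂ : ℝ → ℝ}

theorem quantile_mem_Icc (hP : IsStrictCDF P a b) (hQ : QuantileSandwich P a b q₁ q₂)
    (hq : q ∈ Icc 0 1) : quantile P a b q ∈ Icc (a + (b - a) * q₁ q) (a + (b - a) * q₂ q) := by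
  have hba : 0 < b - a := sub_pos.2 hP.lt
  obtain ⟨h₁, h₂⟩ := hQ q hq
  rw [le_div_iff₀ hba] at h₁
  rw [div_le_iff₀ hba] at h₂
  constructor <;> linarith

theorem lower_le_of_le_apply (hP : IsStrictCDF P a b) (hQ : QuantileSandwich P a b q₁ q₂)
    (hq : q ∈ Icc 0 1) (hs : s ∈ Icc a b) (h : q ≤ P s) : a + (b - a) * q₁ q ≤ s :=
  (hQ.quantile_mem_Icc hP hq).1.trans ((hP.quantile_le_iff hq hs).2 h)

theorem le_upper_of_apply_le (hP : IsStrictCDF P a b) (hQ : QuantileSandwich P a b q₁ q₂)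
    (hq : q ∈ Icc 0 1) (hs : s ∈ Icc a b) (h : P s ≤ q) : s ≤ a + (b - a) * q₂ q :=
  ((hP.le_quantile_iff hq hs).2 h).trans (hQ.quantile_mem_Icc hP hq).2

theorem le_apply_of_upper_le (hP : IsStrictCDF P a b) (hQ : QuantileSandwich P a b q₁ q₂)
    (hq : q ∈ Icc 0 1) (hs : s ∈ Icc a b) (h : a + (b - a) * q₂ q ≤ s) : q ≤ P s :=
  (hP.quantile_le_iff hq hs).1 ((hQ.quantile_mem_Icc hP hq).2.trans h)

theorem apply_le_of_le_lower (hP : IsStrictCDF P a b) (hQ : QuantileSandwich P a b q₁ q₂)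
    (hq : q ∈ Icc 0 1) (hs : s ∈ Icc a b) (h : s ≤ a + (b - a) * q₁ q) : P s ≤ q :=
  (hP.le_quantile_iff hq hs).1 (h.trans (hQ.quantile_mem_Icc hP hq).1)

theorem mem_Icc_of_balanced (hP : IsStrictCDF P a b) (hQ : QuantileSandwich P a b q₁ q₂)
    {Λ γ : ℝ} (hΛ : 0 ≤ Λ) (hγ₁ : γ ≤ q₁ ((1 - √(1 - Λ)) / 2))
    (hγ₂ : γ ≤ 1 - q₂ (1 - (1 - √(1 - Λ)) / 2)) (hs : s ∈ Icc a b)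
    (hbal : Λ ≤ 4 * P s * (1 - P s)) : s ∈ Icc (a + (b - a) * γ) (b - (b - a) * γ) := by
  obtain ⟨hψ₀, hψ₁⟩ := one_sub_sqrt_one_sub_div_two_mem_Icc hΛ
  obtain ⟨h₁, h₂⟩ := abs_le.1 (abs_two_mul_sub_one_le_sqrt hbal)
  have hba : 0 ≤ b - a := sub_nonneg.2 hP.lt.le
  have hl := hQ.lower_le_of_le_apply hP ⟨hψ₀, by linarith⟩ hs (by linarith)
  have hu := hQ.le_upper_of_apply_le hP (q := 1 - (1 - √(1 - Λ)) / 2)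
    ⟨by linarith, by linarith⟩ hs (by linarith)
  constructor <;>
    nlinarith [mul_le_mul_of_nonneg_left hγ₁ hba, mul_le_mul_of_nonneg_left hγ₂ hba]

end QuantileSandwich

section

variable {a b : ℝ}

theorem abs_centered_primitive_le {C s : ℝ} {p g P M : ℝ → ℝ} (hp : ContinuousOn p (Icc a b))
    (hp0 : ∀ u ∈ Icc a b, 0 ≤ p u) (hg : ContinuousOn g (Icc a b))
    (hP : ∀ s, P s = ∫ u in a..s, p u) (hM : ∀ s, M s = ∫ u in a..s, g u * p u)
    (hPb : P b = 1) (hC : ∀ u ∈ Icc a b, |g u - M b| ≤ C) (hs : s ∈ Icc a b) :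
    |M s - M b * P s| ≤ C * P s ∧ |M s - M b * P s| ≤ C * (1 - P s) := by
  have hint : ∀ {f : ℝ → ℝ}, ContinuousOn f (Icc a b) →
      ∀ x ∈ Icc a b, ∀ y ∈ Icc a b, IntervalIntegrable f volume x y :=
    fun hf x hx y hy => (hf.mono (uIcc_subset_Icc hx hy)).intervalIntegrable
  have ha : a ∈ Icc a b := left_mem_Icc.2 (hs.1.trans hs.2)
  have hb : b ∈ Icc a b := right_mem_Icc.2 (hs.1.trans hs.2)
  set φ : ℝ → ℝ := fun u => (g u - M b) * p u
  have hφ : ContinuousOn φ (Icc a b) := (hg.sub continuousOn_const).mul hp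
  have hcentered : ∀ x ∈ Icc a b, M x - M b * P x = ∫ u in a..x, φ u := fun x hx => by
    rw [hM, hP, ← intervalIntegral.integral_const_mul, ← intervalIntegral.integral_sub
      (hint (f := fun u => g u * p u) (hg.mul hp) a ha x hx)
      (hint (f := fun u => M b * p u) (continuousOn_const.mul hp) a ha x hx)]
    simp only [φ, sub_mul]
  have hbound : ∀ x ∈ Icc a b, ∀ y ∈ Icc a b, x ≤ y → |∫ u in x..y, φ u| ≤ C * (P y - P x) :=
    fun x hx y hy hxy => by
    rw [hP, hP, intervalIntegral.integral_interval_sub_left (hint hp a ha y hy)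
      (hint hp a ha x hx), ← intervalIntegral.integral_const_mul]
    refine intervalIntegral.norm_integral_le_of_norm_le (f := φ) hxy
      (ae_of_all _ fun u hu => ?_)
      (hint (f := fun u => C * p u) (continuousOn_const.mul hp) x hx y hy)
    have hu' : u ∈ Icc a b := ⟨hx.1.trans hu.1.le, hu.2.trans hy.2⟩
    rw [Real.norm_eq_abs, abs_mul, abs_of_nonneg (hp0 u hu')]
    exact mul_le_mul_of_nonneg_right (hC u hu') (hp0 u hu')
  have hPa : P a = 0 := by simp [hP]
  have htotal : ∫ u in a..b, φ u = 0 := by rw [← hcentered b hb, hPb, mul_one, sub_self]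
  constructor
  · simpa [hcentered s hs, hPa] using hbound a ha s hs hs.1
  · have hsplit := intervalIntegral.integral_add_adjacent_intervals (hint hφ a ha s hs)
      (hint hφ s hs b hb)
    rw [htotal] at hsplit
    rw [hcentered s hs, eq_neg_of_add_eq_zero_left hsplit, abs_neg, ← hPb]
    exact hbound s hs b hb hs.2

theorem exists_best_split {p g P M Ξ Δ : ℝ → ℝ} (hab : a ≤ b) (hp : ContinuousOn p (Icc a b))
    (hp0 : ∀ u ∈ Icc a b, 0 ≤ p u) (hg : ContinuousOn g (Icc a b))
    (hP : ∀ s, P s = ∫ u in a..s, p u) (hM : ∀ s, M s = ∫ u in a..s, g u * p u)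
    (hPb : P b = 1) (hΞ : ∀ s, Ξ s = M s - M b * P s)
    (hΔ : ∀ s, Δ s = Ξ s ^ 2 / (P s * (1 - P s))) :
    ∃ s ∈ Icc a b, ∀ s' ∈ Icc a b, Δ s' ≤ Δ s := by
  obtain ⟨C, hC⟩ := isCompact_Icc.exists_bound_of_continuousOn
    (hg.sub (continuousOn_const (c := M b)))
  have hbounds := fun s (hs : s ∈ Icc a b) =>
    abs_centered_primitive_le hp hp0 hg hP hM hPb (fun u hu => by simpa using hC u hu) hs
  have hPc : ContinuousOn P (Icc a b) :=
    (continuousOn_primitive_Icc hab hp).congr fun s _ => hP s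
  have hMc : ContinuousOn M (Icc a b) :=
    (continuousOn_primitive_Icc hab (hg.mul hp)).congr fun s _ => hM s
  have hΔc : ContinuousOn Δ (Icc a b) :=
    ((hMc.sub (continuousOn_const.mul hPc)).sq_div_mul_one_sub hPc
      (fun s hs => (hbounds s hs).1) (fun s hs => (hbounds s hs).2)).congr
      fun s _ => by simp only [hΔ, hΞ, Pi.sub_apply, Pi.mul_apply]
  obtain ⟨s, hs, hmax⟩ := isCompact_Icc.exists_isMaxOn (nonempty_Icc.2 hab) hΔc
  exact ⟨s, hs, fun s' hs' => hmax hs'⟩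

end

theorem measureReal_card_filter_le_le_exp {Ω β ι : Type*} [MeasurableSpace Ω] {μ : Measure Ω}
    [IsProbabilityMeasure μ] [MeasurableSpace β] [Fintype ι] {W : ι → Ω → β}
    (hW : ∀ i, Measurable (W i)) (hind : iIndepFun W μ) {T : Set β} (hT : MeasurableSet T)
    [∀ ω, DecidablePred fun i => W i ω ∈ T]
    {q t : ℝ} (hq : ∀ i, q ≤ μ.real (W i ⁻¹' T)) (ht : 0 ≤ t) :
    μ.real {ω | (#{i | W i ω ∈ T} : ℝ) ≤ Fintype.card ι * (q - t)} ≤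
      Real.exp (-2 * Fintype.card ι * t ^ 2) := by
  set X : ι → Ω → ℝ := fun i ω => T.indicator 1 (W i ω)
  have hX_mem : ∀ i ω, X i ω ∈ Icc (0 : ℝ) 1 := fun i ω => by
    simp only [X, Set.indicator]; split_ifs <;> simp
  have hX_integral : ∀ i, μ[X i] = μ.real (W i ⁻¹' T) := fun i =>
    integral_indicator_one ((hW i) hT)
  have hX_sum : ∀ ω, ∑ i, X i ω = #{i | W i ω ∈ T} := fun ω => by
    simp only [X, Set.indicator_apply, Pi.one_apply, Finset.sum_boole]
  let Y : ι → Ω → ℝ := fun i ω => μ[X i] - X i ω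
  have hY_indep : iIndepFun Y μ := by
    exact hind.comp (fun i x => μ[X i] - T.indicator 1 x) fun i =>
      measurable_const.sub (measurable_one.indicator hT)
  have hY_subG : ∀ i ∈ (Finset.univ : Finset ι), HasSubgaussianMGF (Y i) (1 / 4) μ := fun i _ => by
    have h := (hasSubgaussianMGF_of_mem_Icc (μ := μ)
      ((measurable_one.indicator hT).comp (hW i)).aemeasurable (ae_of_all _ (hX_mem i))).neg
    rw [show ((‖(1 : ℝ) - 0‖₊ / 2) ^ 2 : NNReal) = 1 / 4 by norm_num] at h
    exact h.congr (ae_of_all _ fun ω => by simp only [Y, Pi.neg_apply, neg_sub]; rfl)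
  have hoeffding := HasSubgaussianMGF.measure_sum_ge_le_of_iIndepFun hY_indep hY_subG
    (ε := Fintype.card ι * t) (mul_nonneg (by positivity) ht)
  have hexp : -(Fintype.card ι * t) ^ 2 / (2 * ((∑ _ : ι, 1 / 4 : NNReal) : ℝ)) =
      -2 * Fintype.card ι * t ^ 2 := by
    rcases eq_or_ne (Fintype.card ι : ℝ) 0 with hn | hn
    · simp [hn]
    · simp only [Finset.sum_const, Finset.card_univ, nsmul_eq_mul]
      push_cast
      field_simp
      ring
  refine le_trans (measureReal_mono fun ω hω => ?_) (hexp ▸ hoeffding)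
  simp only [mem_ofPred_eq, Y, Finset.sum_sub_distrib, hX_sum, hX_integral] at hω ⊢
  have : Fintype.card ι * q ≤ ∑ i, μ.real (W i ⁻¹' T) := by
    have := Finset.sum_le_sum fun i (_ : i ∈ Finset.univ) => hq i
    rwa [Finset.sum_const, Finset.card_univ, nsmul_eq_mul] at this
  linarith

theorem measureReal_node_counts_ge {Ω ι : Type*} [MeasurableSpace Ω] {μ : Measure Ω}
    [IsProbabilityMeasure μ] [Fintype ι] {W : ι → Ω → ℝ} (hW : ∀ i, Measurable (W i))
    (hind : iIndepFun W μ) {shat : Ω → ℝ} {E : Set Ω} {s₀ s₁ pL pR : ℝ}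
    (hE : ∀ ω ∈ E, s₀ ≤ shat ω ∧ shat ω ≤ s₁) (hpL : 0 ≤ pL) (hpR : 0 ≤ pR)
    (hL : ∀ i, pL ≤ μ.real {ω | W i ω ≤ s₀}) (hR : ∀ i, μ.real {ω | W i ω ≤ s₁} ≤ 1 - pR) :
    μ.real E - 2 * Real.exp (-(Fintype.card ι) * min pL pR ^ 2 / 2) ≤
      μ.real {ω | Fintype.card ι * pL / 2 ≤ (#{i | W i ω ≤ shat ω} : ℝ) ∧
        Fintype.card ι * pR / 2 ≤ (#{i | shat ω < W i ω} : ℝ)} := by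
  have hR' : ∀ i, pR ≤ μ.real (W i ⁻¹' Ioi s₁) := fun i => by
    rw [← compl_Iic, preimage_compl, probReal_compl_eq_one_sub (hW i measurableSet_Iic)]
    exact le_sub_comm.1 (hR i)
  have hbadL := measureReal_card_filter_le_le_exp hW hind measurableSet_Iic hL
    (by positivity : 0 ≤ pL / 2)
  have hbadR := measureReal_card_filter_le_le_exp hW hind measurableSet_Ioi hR'
    (by positivity : 0 ≤ pR / 2)
  set BL := {ω | (#{i | W i ω ∈ Iic s₀} : ℝ) ≤ Fintype.card ι * (pL - pL / 2)}
  set BR := {ω | (#{i | W i ω ∈ Ioi s₁} : ℝ) ≤ Fintype.card ι * (pR - pR / 2)}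
  have hexp : ∀ x, 0 ≤ x → min pL pR ≤ x → Real.exp (-2 * Fintype.card ι * (x / 2) ^ 2) ≤
      Real.exp (-(Fintype.card ι) * min pL pR ^ 2 / 2) := fun x hx hmin => Real.exp_le_exp.2 <| by
    have := mul_le_mul_of_nonneg_left (pow_le_pow_left₀ (le_min hpL hpR) hmin 2)
      (Nat.cast_nonneg (α := ℝ) (Fintype.card ι))
    linarith
  have hcover : E ⊆ {ω | Fintype.card ι * pL / 2 ≤ (#{i | W i ω ≤ shat ω} : ℝ) ∧
      Fintype.card ι * pR / 2 ≤ (#{i | shat ω < W i ω} : ℝ)} ∪ BL ∪ BR := by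
    intro ω hω
    obtain ⟨h₀, h₁⟩ := hE ω hω
    have hcL : #{i | W i ω ∈ Iic s₀} ≤ #{i | W i ω ≤ shat ω} :=
      Finset.card_le_card <| Finset.monotone_filter_right _ fun _ _ (hi : _ ≤ s₀) => hi.trans h₀
    have hcR : #{i | W i ω ∈ Ioi s₁} ≤ #{i | shat ω < W i ω} :=
      Finset.card_le_card <| Finset.monotone_filter_right _ fun _ _ (hi : s₁ < _) => h₁.trans_lt hi
    rcases le_or_gt (#{i | W i ω ∈ Iic s₀} : ℝ) (Fintype.card ι * (pL - pL / 2)) with hbL | hbL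
    · exact Or.inl (Or.inr hbL)
    rcases le_or_gt (#{i | W i ω ∈ Ioi s₁} : ℝ) (Fintype.card ι * (pR - pR / 2)) with hbR | hbR
    · exact Or.inr hbR
    exact Or.inl (Or.inl ⟨by linarith [(Nat.cast_le (α := ℝ)).2 hcL],
      by linarith [(Nat.cast_le (α := ℝ)).2 hcR]⟩)
  have hunion := (measureReal_mono hcover (measure_ne_top μ _)).trans
    ((measureReal_union_le _ _).trans (add_le_add_left (measureReal_union_le _ _) _))
  linarith [hexp pL hpL (min_le_left _ _), hexp pR hpR (min_le_right _ _)]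

theorem QuantileSandwich.measureReal_node_counts_ge {a b γ r₁ r₂ : ℝ} {P q₁ q₂ : ℝ → ℝ}
    (hP : IsStrictCDF P a b) (hQ : QuantileSandwich P a b q₁ q₂) (hγ : γ ∈ Icc 0 1)
    (hr₁ : r₁ ∈ Icc 0 1) (hq₁r₁ : q₁ r₁ = 1 - γ) (hr₂ : r₂ ∈ Icc 0 1) (hq₂r₂ : q₂ r₂ = γ)
    {Ω ι : Type*} [MeasurableSpace Ω] {μ : Measure Ω} [IsProbabilityMeasure μ] [Fintype ι]
    {W : ι → Ω → ℝ} (hW : ∀ i, Measurable (W i)) (hind : iIndepFun W μ)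
    (hWcdf : ∀ i, ∀ s ∈ Icc a b, μ.real {ω | W i ω ≤ s} = P s) {shat : Ω → ℝ} {E : Set Ω}
    (hE : ∀ ω ∈ E, a + (b - a) * γ ≤ shat ω ∧ shat ω ≤ b - (b - a) * γ) :
    μ.real E - 2 * Real.exp (-(Fintype.card ι) * min r₂ (1 - r₁) ^ 2 / 2) ≤
      μ.real {ω | Fintype.card ι * r₂ / 2 ≤ (#{i | W i ω ≤ shat ω} : ℝ) ∧
        Fintype.card ι * (1 - r₁) / 2 ≤ (#{i | shat ω < W i ω} : ℝ)} := by
  have hmargin : (b - a) * γ ∈ Icc 0 (b - a) :=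
    ⟨mul_nonneg (sub_nonneg.2 hP.lt.le) hγ.1, mul_le_of_le_one_right (sub_nonneg.2 hP.lt.le) hγ.2⟩
  have hs₀ : a + (b - a) * γ ∈ Icc a b := ⟨by linarith [hmargin.1], by linarith [hmargin.2]⟩
  have hs₁ : b - (b - a) * γ ∈ Icc a b := ⟨by linarith [hmargin.2], by linarith [hmargin.1]⟩
  have hL := hQ.le_apply_of_upper_le hP hr₂ hs₀ (by rw [hq₂r₂])
  have hR := hQ.apply_le_of_le_lower hP hr₁ hs₁ (by rw [hq₁r₁]; linarith)
  exact _root_.measureReal_node_counts_ge hW hind hE hr₂.1 (sub_nonneg.2 hr₁.2)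
    (fun i => hL.trans_eq (hWcdf i _ hs₀).symm)
    (fun i => (hWcdf i _ hs₁).trans_le (hR.trans_eq (sub_sub_cancel 1 r₁).symm))

theorem empirical_split_node_counts_general
    (a b : ℝ) (hab : a < b)
    (p g : ℝ → ℝ)
    (hp_cont : ContinuousOn p (Set.Icc a b))
    (hp_pos : ∀ u ∈ Set.Icc a b, 0 < p u)
    (hp_one : (∫ u in a..b, p u) = 1)
    (hg_cont : ContinuousOn g (Set.Icc a b))
    (P M Xi Δ Q : ℝ → ℝ)
    (hP : ∀ s, P s = ∫ u in a..s, p u)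
    (hM : ∀ s, M s = ∫ u in a..s, g u * p u)
    (hXi : ∀ s, Xi s = M s - M b * P s)
    (hΔ : ∀ s, Δ s = Xi s ^ 2 / (P s * (1 - P s)))
    (hQ : ∀ q, Q q = sInf {s | s ∈ Set.Icc a b ∧ q ≤ P s})
    (q₁ q₂ q₁inv q₂inv : ℝ → ℝ)
    (hq₁_bij : Set.BijOn q₁ (Set.Icc 0 1) (Set.Icc 0 1))
    (hq₂_bij : Set.BijOn q₂ (Set.Icc 0 1) (Set.Icc 0 1))
    (hq₁inv : ∀ y ∈ Set.Icc (0 : ℝ) 1, q₁inv y ∈ Set.Icc (0 : ℝ) 1 ∧ q₁ (q₁inv y) = y)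
    (hq₂inv : ∀ y ∈ Set.Icc (0 : ℝ) 1, q₂inv y ∈ Set.Icc (0 : ℝ) 1 ∧ q₂ (q₂inv y) = y)
    (hQbounds : ∀ q ∈ Set.Icc (0 : ℝ) 1,
      q₁ q ≤ (Q q - a) / (b - a) ∧ (Q q - a) / (b - a) ≤ q₂ q)
    (Λ : ℝ) (hΛ : Λ ∈ Set.Ioc (0 : ℝ) 1)
    (Sstar : Set ℝ)
    (hSstar : Sstar = {s | s ∈ Set.Icc a b ∧ ∀ s' ∈ Set.Icc a b, Δ s' ≤ Δ s})
    (hbal : ∀ s ∈ Sstar, Λ ≤ 4 * P s * (1 - P s))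
    (Ψ Γ pL pR pbar : ℝ)
    (hΨ : Ψ = 1 - Real.sqrt (1 - Λ))
    (hΓ : Γ = 2 * min (q₁ (Ψ / 2)) (1 - q₂ (1 - Ψ / 2)))
    (hpL : pL = q₂inv (Γ ^ 2 / 2))
    (hpR : pR = 1 - q₁inv (1 - Γ ^ 2 / 2))
    (hpbar : pbar = min pL pR)
    (Ω : Type*) [MeasurableSpace Ω] (Pr : Measure Ω) [IsProbabilityMeasure Pr]
    (δ : ℝ)
    (shat : Ω → ℝ)
    (hclose : 1 - δ ≤
      (Pr {ω | Metric.infDist (shat ω) Sstar ≤ (b - a) / 2 * Γ * (1 - Γ)}).toReal) :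
    (1 - δ ≤ (Pr {ω | a + (b - a) / 2 * Γ ^ 2 ≤ shat ω ∧
        shat ω ≤ b - (b - a) / 2 * Γ ^ 2}).toReal) ∧
    (∀ (N : ℕ) (W : Fin N → Ω → ℝ),
      (∀ i, Measurable (W i)) →
      (∀ i ω, W i ω ∈ Set.Icc a b) →
      (∀ i, ∀ s ∈ Set.Icc a b, (Pr {ω | W i ω ≤ s}).toReal = P s) →
      iIndepFun W Pr →
      1 - δ - 2 * Real.exp (-(N : ℝ) * pbar ^ 2 / 2) ≤
        (Pr {ω | (N : ℝ) * pL / 2 ≤ ((Finset.univ.filter fun i => W i ω ≤ shat ω).card : ℝ) ∧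
            (N : ℝ) * pR / 2 ≤
              ((Finset.univ.filter fun i => shat ω < W i ω).card : ℝ)}).toReal) := by
  obtain rfl : Q = quantile P a b := funext hQ
  subst hΨ hpL hpR hpbar
  have hcdf : IsStrictCDF P a b := .of_density hab hp_cont hp_pos hp_one hP
  have hQS : QuantileSandwich P a b q₁ q₂ := hQbounds
  obtain ⟨hψ₀, hψ₁⟩ := one_sub_sqrt_one_sub_div_two_mem_Icc hΛ.1.le
  have hΓ₂ : Γ / 2 = min (q₁ ((1 - √(1 - Λ)) / 2)) (1 - q₂ (1 - (1 - √(1 - Λ)) / 2)) := by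
    rw [hΓ]; ring
  have hΓ₀ : 0 ≤ Γ := by
    linarith [hΓ₂ ▸ le_min (hq₁_bij.mapsTo ⟨hψ₀, by linarith⟩).1
      (sub_nonneg.2 (hq₂_bij.mapsTo ⟨by linarith, by linarith⟩).2)]
  have hloc : Sstar ⊆ Icc (a + (b - a) * (Γ / 2)) (b - (b - a) * (Γ / 2)) := fun s hs =>
    hQS.mem_Icc_of_balanced hcdf hΛ.1.le (hΓ₂ ▸ min_le_left _ _) (hΓ₂ ▸ min_le_right _ _)
      (by rw [hSstar] at hs; exact hs.1) (hbal s hs)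
  -- `Metric.infDist x ∅ = 0`, so without a best split the closeness hypothesis says nothing.
  obtain ⟨s, hs⟩ : Sstar.Nonempty := by
    obtain ⟨s, hs, hmax⟩ := exists_best_split hab.le hp_cont (fun u hu => (hp_pos u hu).le)
      hg_cont hP hM hcdf.apply_right hXi hΔ
    exact ⟨s, hSstar ▸ ⟨hs, hmax⟩⟩
  have hΓ₁ : Γ ≤ 1 := by nlinarith [(hloc hs).1.trans (hloc hs).2]
  have hsub : {ω | Metric.infDist (shat ω) Sstar ≤ (b - a) / 2 * Γ * (1 - Γ)} ⊆
      {ω | a + (b - a) / 2 * Γ ^ 2 ≤ shat ω ∧ shat ω ≤ b - (b - a) / 2 * Γ ^ 2} := fun ω hω => by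
    have := mem_Icc_of_infDist_le ⟨s, hs⟩ hloc hω
    constructor <;> linarith [this.1, this.2]
  refine ⟨hclose.trans (measureReal_mono hsub), fun N W hW _ hWcdf hind => ?_⟩
  have hγ : Γ ^ 2 / 2 ∈ Icc (0 : ℝ) 1 := ⟨by positivity, by nlinarith⟩
  obtain ⟨hr₂, hq₂r₂⟩ := hq₂inv _ hγ
  obtain ⟨hr₁, hq₁r₁⟩ := hq₁inv (1 - Γ ^ 2 / 2) ⟨by linarith [hγ.2], by linarith [hγ.1]⟩
  have key := hQS.measureReal_node_counts_ge hcdf hγ hr₁ hq₁r₁ hr₂ hq₂r₂ hW hind hWcdf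
    (shat := shat) fun ω hω => by have := hsub hω; constructor <;> linarith [this.1, this.2]
  rw [Fintype.card_fin, measureReal_def, measureReal_def] at key
  linarith

/-- Under Assumption (Q), if every best split is `Λ`-balanced and an
empirical split `ŝ` is, with probability at least `1 − δ`, within
`((b−a)/2)Γ(1−Γ)` of the set of best splits, then (i) with probability at least `1 − δ`
the split `ŝ` is at distance at least `((b−a)/2)Γ²` from both edges, and (ii) for i.i.d.
observations `W₁, …, W_N` with conditional distribution function `P`, with probability at
least `1 − δ − 2exp(−N p̄²/2)` each daughter node contains the stated fraction of the
observations. -/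
theorem empirical_split_node_counts
    (a b : ℝ) (hab : a < b)
    (p g : ℝ → ℝ)
    (hp_cont : ContinuousOn p (Set.Icc a b))
    (hp_pos : ∀ u ∈ Set.Icc a b, 0 < p u)
    (hp_one : (∫ u in a..b, p u) = 1)
    (hg_cont : ContinuousOn g (Set.Icc a b))
    (P M Xi G Δ Q : ℝ → ℝ)
    (hP : ∀ s, P s = ∫ u in a..s, p u)
    (hM : ∀ s, M s = ∫ u in a..s, g u * p u)
    (hXi : ∀ s, Xi s = M s - M b * P s)
    (hG : ∀ s, G s = g s - M b)
    (hΔ : ∀ s, Δ s = Xi s ^ 2 / (P s * (1 - P s)))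
    (hQ : ∀ q, Q q = sInf {s | s ∈ Set.Icc a b ∧ q ≤ P s})
    (q₁ q₂ q₁inv q₂inv : ℝ → ℝ)
    (hq₁_mono : StrictMonoOn q₁ (Set.Icc 0 1))
    (hq₁_bij : Set.BijOn q₁ (Set.Icc 0 1) (Set.Icc 0 1))
    (hq₂_mono : StrictMonoOn q₂ (Set.Icc 0 1))
    (hq₂_bij : Set.BijOn q₂ (Set.Icc 0 1) (Set.Icc 0 1))
    (hq₁inv : ∀ y ∈ Set.Icc (0 : ℝ) 1, q₁inv y ∈ Set.Icc (0 : ℝ) 1 ∧ q₁ (q₁inv y) = y)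
    (hq₂inv : ∀ y ∈ Set.Icc (0 : ℝ) 1, q₂inv y ∈ Set.Icc (0 : ℝ) 1 ∧ q₂ (q₂inv y) = y)
    (hQbounds : ∀ q ∈ Set.Icc (0 : ℝ) 1,
      q₁ q ≤ (Q q - a) / (b - a) ∧ (Q q - a) / (b - a) ≤ q₂ q)
    (Λ : ℝ) (hΛ : Λ ∈ Set.Ioc (0 : ℝ) 1)
    (Sstar : Set ℝ)
    (hSstar : Sstar = {s | s ∈ Set.Icc a b ∧ ∀ s' ∈ Set.Icc a b, Δ s' ≤ Δ s})
    (hbal : ∀ s ∈ Sstar, Λ ≤ 4 * P s * (1 - P s))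
    (Ψ Γ pL pR pbar : ℝ)
    (hΨ : Ψ = 1 - Real.sqrt (1 - Λ))
    (hΓ : Γ = 2 * min (q₁ (Ψ / 2)) (1 - q₂ (1 - Ψ / 2)))
    (hpL : pL = q₂inv (Γ ^ 2 / 2))
    (hpR : pR = 1 - q₁inv (1 - Γ ^ 2 / 2))
    (hpbar : pbar = min pL pR)
    (Ω : Type*) [MeasurableSpace Ω] (Pr : Measure Ω) [IsProbabilityMeasure Pr]
    (δ : ℝ) (hδ : δ ∈ Set.Icc (0 : ℝ) 1)
    (shat : Ω → ℝ) (hshat_meas : Measurable shat)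
    (hclose : 1 - δ ≤
      (Pr {ω | Metric.infDist (shat ω) Sstar ≤ (b - a) / 2 * Γ * (1 - Γ)}).toReal) :
    (1 - δ ≤ (Pr {ω | a + (b - a) / 2 * Γ ^ 2 ≤ shat ω ∧
        shat ω ≤ b - (b - a) / 2 * Γ ^ 2}).toReal) ∧
    (∀ (N : ℕ) (W : Fin N → Ω → ℝ),
      (∀ i, Measurable (W i)) →
      (∀ i ω, W i ω ∈ Set.Icc a b) →
      (∀ i, ∀ s ∈ Set.Icc a b, (Pr {ω | W i ω ≤ s}).toReal = P s) →
      iIndepFun W Pr →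
      1 - δ - 2 * Real.exp (-(N : ℝ) * pbar ^ 2 / 2) ≤
        (Pr {ω | (N : ℝ) * pL / 2 ≤ ((Finset.univ.filter fun i => W i ω ≤ shat ω).card : ℝ) ∧
            (N : ℝ) * pR / 2 ≤
              ((Finset.univ.filter fun i => shat ω < W i ω).card : ℝ)}).toReal) :=
  empirical_split_node_counts_general a b hab p g hp_cont hp_pos hp_one hg_cont P M Xi Δ Q hP hM hXi
    hΔ hQ q₁ q₂ q₁inv q₂inv hq₁_bij hq₂_bij hq₁inv hq₂inv hQbounds Λ hΛ Sstar hSstar hbal Ψ Γ pL pR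
    pbar hΨ hΓ hpL hpR hpbar Ω Pr δ shat hclose

end
end

section
/- Let k ≥ 1 be an integer and let 0 ≤ a < b ≤ 1. Consider the one-dimensional split framework on [a,b] with uniform density p(u) = 1/(b − a) and g(u) = u^k. Then every best split s* satisfies 4·((s* − a)/(b − a))·((b − s*)/(b − a)) ≥ (1/(k(k+1)))^{2/3}. -/
/-!
For `g(u) = uᵏ` the impurity decrease factors as `Δ(s) = P(1 - P) · W(s)² / (k + 1)²`, with
`P = P(s)` and `W = powGap a b s (k - 1)` a polynomial in `s` with nonnegative coefficients.
Hence `W` is nondecreasing, and `W(s) ≥ cᵏ⁻¹ W(b)` whenever `s ≥ c b` with `0 ≤ c ≤ 1`.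
Comparing a best split `s*` with `s₀ = b - e (b - a)`, `e = 1 / (2 (k + 1))`, for which
`s₀ ≥ (1 - e) b` and `P(s₀)(1 - P(s₀)) = (1 - e) e`, gives
`P(s*)(1 - P(s*)) ≥ (1 - e)^(2k - 1) e`. Bernoulli's inequality and a polynomial inequality
bound `4 (1 - e)^(2k - 1) e` below by `(k (k + 1))^(-2/3)`.
-/

open MeasureTheory Set Real

noncomputable section

namespace RegressionTree16

/-- Impurity decrease on the node `[a,b]` for the uniform density `1/(b−a)` and
partial dependence function `g`:
`Δ(s) = (M(s) − M(b)P(s))²/(P(s)(1 − P(s)))` with `P(s) = (s−a)/(b−a)` and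
`M(s) = ∫_a^s g(u)/(b−a) du` (and `Δ(a) = Δ(b) = 0`). -/
def uniformDelta (a b : ℝ) (g : ℝ → ℝ) (s : ℝ) : ℝ :=
  ((∫ u in a..s, g u / (b - a)) - (∫ u in a..b, g u / (b - a)) * ((s - a) / (b - a))) ^ 2 /
    ((s - a) / (b - a) * (1 - (s - a) / (b - a)))

/-- `powGap a b s k = ∑_{i<k} sⁱ (b^(k-i) - a^(k-i))`, which is `(b - a)` times the second
divided difference of `x ↦ x^(k+1)` at `a, s, b`. -/
def powGap (a b s : ℝ) : ℕ → ℝ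
  | 0 => 0
  | k + 1 => s * powGap a b s k + (b ^ (k + 1) - a ^ (k + 1))

theorem powGap_spec (a b s : ℝ) (k : ℕ) :
    (b ^ (k + 1) - a ^ (k + 1)) * (s - a) - (s ^ (k + 1) - a ^ (k + 1)) * (b - a)
      = (s - a) * (b - s) * powGap a b s k := by
  induction k with
  | zero => simp [powGap]; ring
  | succ k ih => simp only [powGap]; linear_combination s * ih

theorem uniformDelta_pow {a b : ℝ} (hab : a ≠ b) (k : ℕ) (s : ℝ) :
    uniformDelta a b (fun u => u ^ k) s
      = (s - a) / (b - a) * ((b - s) / (b - a)) * powGap a b s k ^ 2 / ((k : ℝ) + 1) ^ 2 := by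
  have hba : b - a ≠ 0 := sub_ne_zero.2 hab.symm
  have hP : 1 - (s - a) / (b - a) = (b - s) / (b - a) := by field_simp; ring
  set q := (s - a) / (b - a) * ((b - s) / (b - a)) with hq
  have hΞ : (∫ u in a..s, u ^ k / (b - a)) - (∫ u in a..b, u ^ k / (b - a)) * ((s - a) / (b - a))
      = -(q * powGap a b s k / ((k : ℝ) + 1)) := by
    simp only [intervalIntegral.integral_div, integral_pow, hq]
    field_simp
    linear_combination -powGap_spec a b s k
  rw [uniformDelta, hΞ, hP, ← hq]
  rcases eq_or_ne q 0 with hq0 | hq0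
  · simp [hq0]
  · field_simp

section powGap

variable {a b : ℝ}

theorem powGap_nonneg (ha : 0 ≤ a) (hab : a ≤ b) {s : ℝ} (hs : 0 ≤ s) (k : ℕ) :
    0 ≤ powGap a b s k := by
  induction k with
  | zero => exact le_rfl
  | succ k ih => exact add_nonneg (mul_nonneg hs ih) (sub_nonneg.2 (pow_le_pow_left₀ ha hab _))

theorem pow_mul_powGap_le (ha : 0 ≤ a) (hab : a ≤ b) {c s t : ℝ} (hc₀ : 0 ≤ c) (hc₁ : c ≤ 1)
    (ht : 0 ≤ t) (hcts : c * t ≤ s) (k : ℕ) :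
    c ^ k * powGap a b t (k + 1) ≤ powGap a b s (k + 1) := by
  induction k with
  | zero => simp [powGap]
  | succ k ih =>
    have hd : 0 ≤ b ^ (k + 2) - a ^ (k + 2) := sub_nonneg.2 (pow_le_pow_left₀ ha hab _)
    have hck : c ^ (k + 1) ≤ 1 := pow_le_one₀ hc₀ hc₁
    calc c ^ (k + 1) * powGap a b t (k + 2)
        = c * t * (c ^ k * powGap a b t (k + 1)) + c ^ (k + 1) * (b ^ (k + 2) - a ^ (k + 2)) := by
          simp only [powGap]; ring
      _ ≤ s * powGap a b s (k + 1) + 1 * (b ^ (k + 2) - a ^ (k + 2)) := by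
          gcongr
          · exact mul_nonneg (pow_nonneg hc₀ k) (powGap_nonneg ha hab ht _)
          · exact (mul_nonneg hc₀ ht).trans hcts
      _ = powGap a b s (k + 2) := by simp only [powGap]; ring

theorem powGap_mono (ha : 0 ≤ a) (hab : a ≤ b) {s t : ℝ} (hs : 0 ≤ s) (hst : s ≤ t) (k : ℕ) :
    powGap a b s (k + 1) ≤ powGap a b t (k + 1) := by
  simpa using pow_mul_powGap_le ha hab zero_le_one le_rfl hs (by simpa using hst) k

theorem powGap_pos {s : ℝ} (ha : 0 ≤ a) (hab : a < b) (hs : 0 ≤ s) (k : ℕ) :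
    0 < powGap a b s (k + 1) := by
  have hW := powGap_nonneg ha hab.le hs k
  have hpow : a ^ (k + 1) < b ^ (k + 1) := pow_lt_pow_left₀ hab ha k.succ_ne_zero
  simp only [powGap]
  nlinarith

end powGap

theorem mul_balance_le_of_uniformDelta_le {k : ℕ} {a b s s₀ c : ℝ} (ha : 0 ≤ a) (hab : a < b)
    (hs : s ∈ Icc a b) (hs₀ : s₀ ∈ Icc a b)
    (hΔ : uniformDelta a b (fun u => u ^ (k + 1)) s₀ ≤ uniformDelta a b (fun u => u ^ (k + 1)) s)
    (hc : 0 ≤ c) (hW : c * powGap a b b (k + 1) ≤ powGap a b s₀ (k + 1)) :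
    c ^ 2 * ((s₀ - a) / (b - a) * ((b - s₀) / (b - a))) ≤
      (s - a) / (b - a) * ((b - s) / (b - a)) := by
  obtain ⟨hsa, hsb⟩ := hs
  obtain ⟨hs₀a, hs₀b⟩ := hs₀
  have hba : 0 < b - a := sub_pos.2 hab
  rw [uniformDelta_pow hab.ne, uniformDelta_pow hab.ne,
    div_le_div_iff_of_pos_right (by positivity)] at hΔ
  have hWb := powGap_pos ha hab (ha.trans hab.le) k
  have hWs := powGap_nonneg ha hab.le (ha.trans hsa) (k + 1)
  have hs₀W : 0 ≤ (s₀ - a) / (b - a) * ((b - s₀) / (b - a)) := by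
    apply mul_nonneg <;> apply div_nonneg <;> linarith
  have hsW : 0 ≤ (s - a) / (b - a) * ((b - s) / (b - a)) := by
    apply mul_nonneg <;> apply div_nonneg <;> linarith
  refine le_of_mul_le_mul_right ?_ (pow_pos hWb 2)
  calc c ^ 2 * ((s₀ - a) / (b - a) * ((b - s₀) / (b - a))) * powGap a b b (k + 1) ^ 2
      = (s₀ - a) / (b - a) * ((b - s₀) / (b - a)) * (c * powGap a b b (k + 1)) ^ 2 := by ring
    _ ≤ (s₀ - a) / (b - a) * ((b - s₀) / (b - a)) * powGap a b s₀ (k + 1) ^ 2 := by gcongr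
    _ ≤ (s - a) / (b - a) * ((b - s) / (b - a)) * powGap a b s (k + 1) ^ 2 := hΔ
    _ ≤ (s - a) / (b - a) * ((b - s) / (b - a)) * powGap a b b (k + 1) ^ 2 := by
      gcongr
      exact powGap_mono ha hab.le (ha.trans hsa) hsb k

theorem rpow_two_div_three_le {x y : ℝ} (hx : 0 ≤ x) (hy : 0 ≤ y) (h : x ^ 2 ≤ y ^ 3) :
    x ^ ((2 : ℝ) / 3) ≤ y := by
  rw [div_eq_mul_inv, Real.rpow_mul hx, Real.rpow_inv_le_iff_of_pos (by positivity) hy three_pos]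
  exact_mod_cast h

theorem one_div_mul_succ_rpow_le (j : ℕ) :
    (1 / (((j : ℝ) + 1) * ((j : ℝ) + 1 + 1))) ^ ((2 : ℝ) / 3) ≤
      4 * (((1 - 1 / (2 * ((j : ℝ) + 2))) ^ j) ^ 2 *
        ((1 - 1 / (2 * ((j : ℝ) + 2))) * (1 / (2 * ((j : ℝ) + 2))))) := by
  set e : ℝ := 1 / (2 * ((j : ℝ) + 2)) with he
  have he₁ : e ≤ 1 := by rw [he, div_le_one (by positivity)]; linarith
  have hBernoulli : 1 - j * e ≤ (1 - e) ^ j := by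
    have := one_add_mul_sub_le_pow (show (-1 : ℝ) ≤ 1 - e by linarith) j
    linarith
  have hje : 0 ≤ 1 - j * e := by
    rw [he, mul_one_div, sub_nonneg, div_le_one (by positivity)]
    linarith
  have hpoly : (4 * ((j : ℝ) + 2) ^ 4) ^ 3 ≤
      ((2 * j + 3) * (j + 4) ^ 2) ^ 3 * ((j + 1) * (j + 1 + 1)) ^ 2 := by
    -- the difference, expanded in `j`, has only positive coefficients
    rw [← sub_nonneg]
    ring_nf
    positivity
  calc (1 / (((j : ℝ) + 1) * ((j : ℝ) + 1 + 1))) ^ ((2 : ℝ) / 3)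
      ≤ (2 * j + 3) * (j + 4) ^ 2 / (4 * (j + 2) ^ 4) := by
        apply rpow_two_div_three_le (by positivity) (by positivity)
        rw [div_pow, div_pow, div_le_div_iff₀ (by positivity) (by positivity)]
        linarith
    _ = 4 * ((1 - j * e) ^ 2 * ((1 - e) * e)) := by
        rw [he]; field_simp; ring
    _ ≤ 4 * (((1 - e) ^ j) ^ 2 * ((1 - e) * e)) := by
        have : 0 ≤ 1 - e := by linarith
        gcongr

theorem monomial_balancedness_general (k : ℕ) (hk : 1 ≤ k)
    (a b : ℝ) (ha : 0 ≤ a) (hab : a < b)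
    (sstar : ℝ) (hmem : sstar ∈ Set.Icc a b)
    (hmax : ∀ s ∈ Set.Icc a b,
      uniformDelta a b (fun u => u ^ k) s ≤ uniformDelta a b (fun u => u ^ k) sstar) :
    (1 / ((k : ℝ) * ((k : ℝ) + 1))) ^ ((2 : ℝ) / 3) ≤
      4 * ((sstar - a) / (b - a)) * ((b - sstar) / (b - a)) := by
  obtain ⟨j, rfl⟩ : ∃ j, k = j + 1 := ⟨k - 1, by omega⟩
  set e : ℝ := 1 / (2 * ((j : ℝ) + 2)) with he
  have he₀ : 0 ≤ e := by positivity
  have he₁ : e ≤ 1 := by rw [he, div_le_one (by positivity)]; linarith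
  have hba : 0 < b - a := sub_pos.2 hab
  have hs₀ : b - e * (b - a) ∈ Icc a b := ⟨by nlinarith, by nlinarith⟩
  have hW : (1 - e) ^ j * powGap a b b (j + 1) ≤ powGap a b (b - e * (b - a)) (j + 1) :=
    pow_mul_powGap_le ha hab.le (by linarith) (by linarith) (ha.trans hab.le)
      (by nlinarith [mul_nonneg he₀ ha]) j
  have hbal := mul_balance_le_of_uniformDelta_le ha hab hmem hs₀ (hmax _ hs₀)
    (pow_nonneg (by linarith) j) hW
  have hP : (b - e * (b - a) - a) / (b - a) * ((b - (b - e * (b - a))) / (b - a))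
      = (1 - e) * e := by
    field_simp; ring
  rw [hP] at hbal
  push_cast
  calc _ ≤ 4 * (((1 - e) ^ j) ^ 2 * ((1 - e) * e)) := one_div_mul_succ_rpow_le j
    _ ≤ _ := by linarith

/-- For `g(u) = u^k` on `[a,b] ⊆ [0,1]` with the uniform density, every
best split `s*` satisfies `4 P(s*)(1 − P(s*)) ≥ (1/(k(k+1)))^{2/3}`. -/
theorem monomial_balancedness (k : ℕ) (hk : 1 ≤ k)
    (a b : ℝ) (ha : 0 ≤ a) (hab : a < b) (hb : b ≤ 1)
    (sstar : ℝ) (hmem : sstar ∈ Set.Icc a b)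
    (hmax : ∀ s ∈ Set.Icc a b,
      uniformDelta a b (fun u => u ^ k) s ≤ uniformDelta a b (fun u => u ^ k) sstar) :
    (1 / ((k : ℝ) * ((k : ℝ) + 1))) ^ ((2 : ℝ) / 3) ≤
      4 * ((sstar - a) / (b - a)) * ((b - sstar) / (b - a)) :=
  monomial_balancedness_general k hk a b ha hab sstar hmem hmax

end RegressionTree16
end
end

section
/- Let 0 ≤ a < b ≤ 1 and consider the one-dimensional split framework on [a,b] with uniform density p(u) = 1/(b − a) and g(u) = (u − 1/2)². Then every best split s* satisfies 4·((s* − a)/(b − a))·((b − s*)/(b − a)) ≥ (1/12)^{2/3}. -/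
/-!
After the substitution `s = a + u (b - a)` the impurity decrease becomes
`(b - a)² / 9 · u (1 - u) (c + (b - a) u)²` with `c = 2a + b - 3/2`: the weight `u (1 - u)` times
the square of an affine function. On `[0, 1]` that square is at most its larger endpoint value
`Q`, while at the point `1/8` or `7/8` next to that endpoint it is still at least `(3/4)² Q`.
Comparing the maximiser `t` with that point gives `t (1 - t) Q ≥ (7/64) (9/16) Q`, i.e.
`4 t (1 - t) ≥ 63/256`, and `(63/256)³ ≥ 1/144 = ((1/12)^{2/3})³`.
-/

open MeasureTheory Set Real

noncomputable section

namespace RegressionTree18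

/-- Impurity decrease on the node `[a,b]` for the uniform density `1/(b−a)` and
partial dependence function `g`:
`Δ(s) = (M(s) − M(b)P(s))²/(P(s)(1 − P(s)))` with `P(s) = (s−a)/(b−a)` and
`M(s) = ∫_a^s g(u)/(b−a) du` (and `Δ(a) = Δ(b) = 0`). -/
def uniformDelta (a b : ℝ) (g : ℝ → ℝ) (s : ℝ) : ℝ :=
  ((∫ u in a..s, g u / (b - a)) - (∫ u in a..b, g u / (b - a)) * ((s - a) / (b - a))) ^ 2 /
    ((s - a) / (b - a) * (1 - (s - a) / (b - a)))

lemma integral_sub_half_sq_div (a b s : ℝ) :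
    ∫ u in a..s, (u - 1 / 2) ^ 2 / (b - a)
      = ((s - 1 / 2) ^ 3 - (a - 1 / 2) ^ 3) / (3 * (b - a)) := by
  rw [intervalIntegral.integral_div,
    intervalIntegral.integral_comp_sub_right (f := fun x => x ^ 2) (1 / 2), integral_pow]
  norm_num [div_div]

lemma uniformDelta_sub_half_sq (a b u : ℝ) :
    uniformDelta a b (fun u => (u - 1 / 2) ^ 2) (a + u * (b - a))
      = (b - a) ^ 2 / 9 * (u * (1 - u) * (2 * a + b - 3 / 2 + (b - a) * u) ^ 2) := by
  rcases eq_or_ne (b - a) 0 with hba | hba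
  · simp [uniformDelta, hba]
  have hu : (a + u * (b - a) - a) / (b - a) = u := by field_simp; ring
  have hnum : ((a + u * (b - a) - 1 / 2) ^ 3 - (a - 1 / 2) ^ 3) / (3 * (b - a))
      - ((b - 1 / 2) ^ 3 - (a - 1 / 2) ^ 3) / (3 * (b - a)) * u
      = u * (1 - u) * (-((b - a) * (2 * a + b - 3 / 2 + (b - a) * u) / 3)) := by
    field_simp
    ring
  unfold uniformDelta
  rw [integral_sub_half_sq_div, integral_sub_half_sq_div, hu, hnum, mul_pow, sq (u * (1 - u)),
    mul_div_right_comm, mul_self_div_self]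
  ring

lemma sq_affine_le_max {c L u : ℝ} (hu : u ∈ Icc (0 : ℝ) 1) :
    (c + L * u) ^ 2 ≤ max (c ^ 2) ((c + L) ^ 2) := by
  have hw : 0 ≤ u * (1 - u) := mul_nonneg hu.1 (sub_nonneg.2 hu.2)
  have hjensen : (c + L * u) ^ 2 = (1 - u) * c ^ 2 + u * (c + L) ^ 2 - u * (1 - u) * L ^ 2 := by
    ring
  nlinarith [hu.1, hu.2, le_max_left (c ^ 2) ((c + L) ^ 2), le_max_right (c ^ 2) ((c + L) ^ 2),
    mul_nonneg hw (sq_nonneg L)]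

lemma exists_sq_affine_ge_max (c L : ℝ) :
    ∃ e ∈ Icc (0 : ℝ) 1, e * (1 - e) = 7 / 64 ∧
      9 / 16 * max (c ^ 2) ((c + L) ^ 2) ≤ (c + L * e) ^ 2 := by
  rcases le_total (c ^ 2) ((c + L) ^ 2) with h | h
  · refine ⟨7 / 8, by norm_num, by norm_num, ?_⟩
    rw [max_eq_right h]
    nlinarith [sq_nonneg (2 * c + L), sq_nonneg L]
  · refine ⟨1 / 8, by norm_num, by norm_num, ?_⟩
    rw [max_eq_left h]
    nlinarith [sq_nonneg (2 * c + L), sq_nonneg L]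

lemma le_mul_one_sub_of_isMaxOn {c L t : ℝ} (hL : L ≠ 0) (ht : t ∈ Icc (0 : ℝ) 1)
    (hmax : IsMaxOn (fun u => u * (1 - u) * (c + L * u) ^ 2) (Icc 0 1) t) :
    63 / 1024 ≤ t * (1 - t) := by
  set Q := max (c ^ 2) ((c + L) ^ 2)
  have hQ : 0 < Q := by
    by_contra! hQ
    have hc : c = 0 := by nlinarith [le_max_left (c ^ 2) ((c + L) ^ 2)]
    have hcL : c + L = 0 := by nlinarith [le_max_right (c ^ 2) ((c + L) ^ 2)]
    exact hL (by linarith)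
  obtain ⟨e, he, hwe, hQe⟩ := exists_sq_affine_ge_max c L
  have hwt : 0 ≤ t * (1 - t) := mul_nonneg ht.1 (sub_nonneg.2 ht.2)
  have : 63 / 1024 * Q ≤ t * (1 - t) * Q :=
    calc 63 / 1024 * Q = e * (1 - e) * (9 / 16 * Q) := by rw [hwe]; ring
      _ ≤ e * (1 - e) * (c + L * e) ^ 2 := by rw [hwe]; gcongr
      _ ≤ t * (1 - t) * (c + L * t) ^ 2 := hmax he
      _ ≤ t * (1 - t) * Q := by gcongr; exact sq_affine_le_max ht
  exact le_of_mul_le_mul_right this hQ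

lemma one_div_twelve_rpow_two_div_three_le : ((1 : ℝ) / 12) ^ ((2 : ℝ) / 3) ≤ 63 / 256 := by
  rw [← Real.rpow_le_rpow_iff (z := 3) (by positivity) (by norm_num) (by norm_num),
    ← Real.rpow_mul (by norm_num)]
  norm_num

theorem shifted_square_balancedness_general
    (a b : ℝ) (hab : a < b)
    (sstar : ℝ) (hmem : sstar ∈ Set.Icc a b)
    (hmax : ∀ s ∈ Set.Icc a b,
      uniformDelta a b (fun u => (u - 1 / 2) ^ 2) s ≤
        uniformDelta a b (fun u => (u - 1 / 2) ^ 2) sstar) :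
    ((1 : ℝ) / 12) ^ ((2 : ℝ) / 3) ≤
      4 * ((sstar - a) / (b - a)) * ((b - sstar) / (b - a)) := by
  have hba : 0 < b - a := sub_pos.2 hab
  set t := (sstar - a) / (b - a)
  have hsstar : sstar = a + t * (b - a) := by simp only [t]; field_simp; ring
  have hbt : (b - sstar) / (b - a) = 1 - t := by rw [hsstar]; field_simp; ring
  have ht : t ∈ Icc (0 : ℝ) 1 := by
    constructor
    · exact div_nonneg (by linarith [hmem.1]) hba.le
    · exact (div_le_one hba).2 (by linarith [hmem.2])
  have hmaxt : IsMaxOn (fun u => u * (1 - u) * (2 * a + b - 3 / 2 + (b - a) * u) ^ 2)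
      (Icc 0 1) t := by
    intro u hu
    have hs : a + u * (b - a) ∈ Icc a b :=
      ⟨by nlinarith [hu.1], by nlinarith [hu.2]⟩
    have h := hmax _ hs
    rw [hsstar, uniformDelta_sub_half_sq a b u, uniformDelta_sub_half_sq a b t] at h
    exact le_of_mul_le_mul_left h (by positivity)
  have hbalance := le_mul_one_sub_of_isMaxOn hba.ne' ht hmaxt
  rw [hbt]
  linarith [one_div_twelve_rpow_two_div_three_le]

/-- For `g(u) = (u − 1/2)²` on `[a,b] ⊆ [0,1]` with the uniform
density, every best split `s*` satisfies `4 P(s*)(1 − P(s*)) ≥ (1/12)^{2/3}`. -/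
theorem shifted_square_balancedness
    (a b : ℝ) (ha : 0 ≤ a) (hab : a < b) (hb : b ≤ 1)
    (sstar : ℝ) (hmem : sstar ∈ Set.Icc a b)
    (hmax : ∀ s ∈ Set.Icc a b,
      uniformDelta a b (fun u => (u - 1 / 2) ^ 2) s ≤
        uniformDelta a b (fun u => (u - 1 / 2) ^ 2) sstar) :
    ((1 : ℝ) / 12) ^ ((2 : ℝ) / 3) ≤
      4 * ((sstar - a) / (b - a)) * ((b - sstar) / (b - a)) :=
  shifted_square_balancedness_general a b hab sstar hmem hmax

end RegressionTree18
end
end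

section
/- In the one-dimensional split framework with uniform density p(u) = 1/(b − a), let c_k = (1/(b − a))·∫_a^b g(s)·e^{−2πik(s−a)/(b−a)} ds for k ∈ ℤ be the Fourier coefficients of g on [a,b]. Then every best split s* satisfies Δ(s*) ≥ π^{−2}·Σ_{k ∈ ℤ, k ≠ 0} |c_k|²/k². -/
/-!
Write `Ξ(s) = M(s) − m P(s)`, so that `Δ = Ξ² / (P (1 − P)) ≥ 4 Ξ²` because `P (1 − P) ≤ 1/4`;
averaging over `s ∈ [a, b]` gives `Δ(s*) ≥ 4 ⨍ Ξ²`. Since `Ξ` vanishes at both ends and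
`Ξ' = (g − m) / (b − a)`, integration by parts gives `Ξ̂_k = ĝ_k / (2πik)` for `k ≠ 0`, while
`|ĝ_k| = |c_k|`. Parseval's identity for `Ξ` then yields
`⨍ Ξ² ≥ Σ_{k ≠ 0} |c_k|² / (4π²k²)`.
-/

open MeasureTheory Set Real

noncomputable section

namespace RegressionTree19

/-- Impurity decrease on the node `[a,b]` for the uniform density `1/(b−a)` and
partial dependence function `g`:
`Δ(s) = (M(s) − M(b)P(s))²/(P(s)(1 − P(s)))` with `P(s) = (s−a)/(b−a)` and
`M(s) = ∫_a^s g(u)/(b−a) du` (and `Δ(a) = Δ(b) = 0`). -/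
def uniformDelta (a b : ℝ) (g : ℝ → ℝ) (s : ℝ) : ℝ :=
  ((∫ u in a..s, g u / (b - a)) - (∫ u in a..b, g u / (b - a)) * ((s - a) / (b - a))) ^ 2 /
    ((s - a) / (b - a) * (1 - (s - a) / (b - a)))

section FourierCoeffOn

variable {a b : ℝ} (hab : a < b)

-- A constant is an antiderivative of `0` taking equal values at both ends.
theorem fourierCoeffOn_const (z : ℂ) {n : ℤ} (hn : n ≠ 0) :
    fourierCoeffOn hab (fun _ => z) n = 0 := by
  rw [fourierCoeffOn_of_hasDerivAt hab hn (f' := 0) (fun x _ => hasDerivAt_const x z)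
    intervalIntegrable_const]
  simp [fourierCoeffOn_eq_integral]

theorem fourierCoeffOn_add_const {f : ℝ → ℂ}
    (hf : IntervalIntegrable f volume a b) (z : ℂ) {n : ℤ} (hn : n ≠ 0) :
    fourierCoeffOn hab (fun x => f x + z) n = fourierCoeffOn hab f n := by
  have hz := fourierCoeffOn_const hab z hn
  have hfourier : ContinuousOn (fun x : ℝ => fourier (-n) (x : AddCircle (b - a))) (uIcc a b) :=
    ((map_continuous _).comp (AddCircle.continuous_mk' _)).continuousOn
  simp only [fourierCoeffOn_eq_integral, smul_add] at hz ⊢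
  rw [intervalIntegral.integral_add (hf.continuousOn_smul hfourier)
    (intervalIntegrable_const.continuousOn_smul hfourier), smul_add, hz, add_zero]

theorem fourierCoeffOn_of_hasDerivAt_Ioo_of_eq {f f' : ℝ → ℂ} {n : ℤ}
    (hn : n ≠ 0) (hf : ContinuousOn f (Icc a b)) (hff' : ∀ x ∈ Ioo a b, HasDerivAt f (f' x) x)
    (hf' : IntervalIntegrable f' volume a b) (hfab : f a = f b) :
    fourierCoeffOn hab f n = (b - a) / (2 * π * Complex.I * n) * fourierCoeffOn hab f' n := by
  rw [fourierCoeffOn_of_hasDerivAt_Ioo hab hn (by rwa [uIcc_of_le hab.le])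
    (by rwa [min_eq_left hab.le, max_eq_right hab.le]) hf', hfab, sub_self, mul_zero]
  have : (n : ℂ) ≠ 0 := Int.cast_ne_zero.2 hn
  field_simp
  ring

-- The coefficients of the statement measure phases from `a`, `fourierCoeffOn` from `0`.
theorem norm_shifted_fourierCoeffOn (f : ℝ → ℂ) (k : ℤ) :
    ‖((1 / (b - a) : ℝ) : ℂ) * ∫ s in a..b, f s *
      Complex.exp (((-2 * π * (k : ℝ) * (s - a) / (b - a) : ℝ) : ℂ) * Complex.I)‖ =
      ‖fourierCoeffOn hab f k‖ := by
  have hshift : ((1 / (b - a) : ℝ) : ℂ) * ∫ s in a..b, f s *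
      Complex.exp (((-2 * π * (k : ℝ) * (s - a) / (b - a) : ℝ) : ℂ) * Complex.I) =
      Complex.exp (((2 * π * k * a / (b - a) : ℝ) : ℂ) * Complex.I) * fourierCoeffOn hab f k := by
    simp only [fourierCoeffOn_eq_integral, Complex.real_smul, smul_eq_mul,
      ← intervalIntegral.integral_const_mul]
    refine intervalIntegral.integral_congr fun x _ => ?_
    have hphase : (((-2 * π * (k : ℝ) * (x - a) / (b - a) : ℝ) : ℂ) * Complex.I) =
        ((2 * π * k * a / (b - a) : ℝ) : ℂ) * Complex.I +
          2 * π * Complex.I * ↑(-k) * x / ↑(b - a) := by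
      push_cast
      ring
    rw [fourier_coe_apply, hphase, Complex.exp_add]
    ring
  rw [hshift, norm_mul, Complex.norm_exp_ofReal_mul_I, one_mul]

end FourierCoeffOn

theorem _root_.ContinuousOn.memLp_two_restrict_Ioc {a b : ℝ} {f : ℝ → ℂ}
    (hf : ContinuousOn f (Icc a b)) : MemLp f 2 (volume.restrict (Ioc a b)) :=
  (memLp_two_iff_integrable_sq_norm
    ((hf.mono Ioc_subset_Icc_self).aestronglyMeasurable measurableSet_Ioc)).2
    ((hf.norm.pow 2).integrableOn_Icc.mono_set Ioc_subset_Icc_self)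

/-- The paper's `Ξ(s) = M(s) − m P(s)` for the uniform density. -/
def uniformXi (a b : ℝ) (g : ℝ → ℝ) (s : ℝ) : ℝ :=
  (∫ u in a..s, g u / (b - a)) - (∫ u in a..b, g u / (b - a)) * ((s - a) / (b - a))

section Impurity

variable {a b : ℝ} {g : ℝ → ℝ}

theorem uniformDelta_eq_sq_uniformXi_div (s : ℝ) :
    uniformDelta a b g s =
      uniformXi a b g s ^ 2 / ((s - a) / (b - a) * (1 - (s - a) / (b - a))) :=
  rfl

theorem uniformXi_left : uniformXi a b g a = 0 := by
  simp [uniformXi]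

theorem uniformXi_right (hab : a ≠ b) : uniformXi a b g b = 0 := by
  simp [uniformXi, div_self (sub_ne_zero.2 hab.symm)]

theorem four_mul_sq_le_sq_div_mul_one_sub (x : ℝ) {t : ℝ} (ht : t ∈ Ioo 0 1) :
    4 * x ^ 2 ≤ x ^ 2 / (t * (1 - t)) := by
  have hpos : 0 < t * (1 - t) := mul_pos ht.1 (sub_pos.2 ht.2)
  rw [le_div_iff₀ hpos]
  nlinarith [mul_nonneg (sq_nonneg x) (sq_nonneg (2 * t - 1))]

theorem four_mul_sq_uniformXi_le_uniformDelta (hab : a < b) {s : ℝ} (hs : s ∈ Icc a b) :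
    4 * uniformXi a b g s ^ 2 ≤ uniformDelta a b g s := by
  -- at `s = a, b` both sides vanish: `Ξ = 0` and the denominator is `0`
  rcases hs.1.eq_or_lt with rfl | has
  · simp [uniformXi_left, uniformDelta_eq_sq_uniformXi_div]
  rcases hs.2.eq_or_lt with rfl | hsb
  · simp [uniformXi_right hab.ne, uniformDelta_eq_sq_uniformXi_div]
  have hba : 0 < b - a := sub_pos.2 hab
  refine four_mul_sq_le_sq_div_mul_one_sub _ ⟨div_pos (sub_pos.2 has) hba, ?_⟩
  rw [div_lt_one hba]
  linarith

theorem continuousOn_uniformXi (hab : a ≤ b) (hg : IntervalIntegrable g volume a b) :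
    ContinuousOn (uniformXi a b g) (Icc a b) := by
  rw [← uIcc_of_le hab]
  exact (intervalIntegral.continuousOn_primitive_interval' (hg.div_const _) left_mem_uIcc).sub
    (continuousOn_const.mul ((continuousOn_id.sub continuousOn_const).div_const _))

theorem continuousOn_ofReal_uniformXi (hab : a ≤ b) (hg : ContinuousOn g (Icc a b)) :
    ContinuousOn (fun s => (uniformXi a b g s : ℂ)) (Icc a b) :=
  Complex.continuous_ofReal.comp_continuousOn
    (continuousOn_uniformXi hab (hg.intervalIntegrable_of_Icc hab))

theorem hasDerivAt_uniformXi (hg : ContinuousOn g (Icc a b)) {x : ℝ} (hx : x ∈ Ioo a b) :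
    HasDerivAt (uniformXi a b g) ((g x - ∫ u in a..b, g u / (b - a)) / (b - a)) x := by
  have hgx : ContinuousOn (fun u => g u / (b - a)) (Icc a b) := hg.div_const _
  have hprimitive : HasDerivAt (fun s => ∫ u in a..s, g u / (b - a)) (g x / (b - a)) x :=
    intervalIntegral.integral_hasDerivAt_right
      ((hgx.mono (Icc_subset_Icc_right hx.2.le)).intervalIntegrable_of_Icc hx.1.le)
      ((hgx.mono Ioo_subset_Icc_self).stronglyMeasurableAtFilter isOpen_Ioo x hx)
      (hgx.continuousAt (Icc_mem_nhds hx.1 hx.2))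
  have hlinear : HasDerivAt (fun s => (∫ u in a..b, g u / (b - a)) * ((s - a) / (b - a)))
      ((∫ u in a..b, g u / (b - a)) * (1 / (b - a))) x :=
    (((hasDerivAt_id' x).sub_const a).div_const (b - a)).const_mul _
  exact (hprimitive.sub hlinear).congr_deriv (by ring)

theorem four_mul_average_sq_uniformXi_le (hab : a < b) (hg : ContinuousOn g (Icc a b)) {D : ℝ}
    (hD : ∀ s ∈ Icc a b, uniformDelta a b g s ≤ D) :
    4 * ((b - a)⁻¹ * ∫ s in a..b, uniformXi a b g s ^ 2) ≤ D := by
  have hXi := continuousOn_uniformXi hab.le (hg.intervalIntegrable_of_Icc hab.le)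
  have hint : ∫ s in a..b, 4 * uniformXi a b g s ^ 2 ≤ ∫ _ in a..b, D :=
    intervalIntegral.integral_mono_on hab.le
      ((continuousOn_const.mul (hXi.pow 2)).intervalIntegrable_of_Icc hab.le)
      intervalIntegrable_const
      fun s hs => (four_mul_sq_uniformXi_le_uniformDelta hab hs).trans (hD s hs)
  rw [intervalIntegral.integral_const_mul, intervalIntegral.integral_const, smul_eq_mul] at hint
  have hba : 0 < b - a := sub_pos.2 hab
  rw [mul_left_comm, inv_mul_le_iff₀ hba]
  linarith

theorem fourierCoeffOn_uniformXi (hab : a < b) (hg : ContinuousOn g (Icc a b)) {n : ℤ}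
    (hn : n ≠ 0) :
    fourierCoeffOn hab (fun s => (uniformXi a b g s : ℂ)) n =
      fourierCoeffOn hab (fun s => (g s : ℂ)) n / (2 * π * Complex.I * n) := by
  set m := ∫ u in a..b, g u / (b - a)
  have hderiv : ∀ x ∈ Ioo a b, HasDerivAt (fun s => (uniformXi a b g s : ℂ))
      (((b - a : ℝ) : ℂ)⁻¹ * ((g x : ℂ) + -(m : ℂ))) x := fun x hx => by
    convert (hasDerivAt_uniformXi hg hx).ofReal_comp using 1
    push_cast
    ring
  have hgint : IntervalIntegrable (fun s => (g s : ℂ)) volume a b :=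
    (Complex.continuous_ofReal.comp_continuousOn hg).intervalIntegrable_of_Icc hab.le
  have hba : ((b - a : ℝ) : ℂ) ≠ 0 := Complex.ofReal_ne_zero.2 (sub_pos.2 hab).ne'
  rw [fourierCoeffOn_of_hasDerivAt_Ioo_of_eq hab hn
      (continuousOn_ofReal_uniformXi hab.le hg) hderiv
      ((hgint.add intervalIntegrable_const).const_mul _)
      (by simp [uniformXi_left, uniformXi_right hab.ne]),
    fourierCoeffOn.const_mul, fourierCoeffOn_add_const hab hgint _ hn]
  push_cast at hba ⊢
  field_simp

theorem hasSum_sq_fourierCoeffOn_uniformXi (hab : a < b) (hg : ContinuousOn g (Icc a b)) :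
    HasSum (fun k => ‖fourierCoeffOn hab (fun s => (uniformXi a b g s : ℂ)) k‖ ^ 2)
      ((b - a)⁻¹ * ∫ s in a..b, uniformXi a b g s ^ 2) := by
  simpa [Complex.norm_real, sq_abs] using
    hasSum_sq_fourierCoeffOn hab (continuousOn_ofReal_uniformXi hab.le hg).memLp_two_restrict_Ioc

theorem sq_norm_fourierCoeffOn_uniformXi (hab : a < b) (hg : ContinuousOn g (Icc a b)) {k : ℤ}
    (hk : k ≠ 0) :
    (2 * π) ^ 2 * ‖fourierCoeffOn hab (fun s => (uniformXi a b g s : ℂ)) k‖ ^ 2 =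
      ‖fourierCoeffOn hab (fun s => (g s : ℂ)) k‖ ^ 2 / (k : ℝ) ^ 2 := by
  have hk' : (k : ℝ) ≠ 0 := Int.cast_ne_zero.2 hk
  rw [fourierCoeffOn_uniformXi hab hg hk, norm_div]
  simp only [Complex.norm_mul, Complex.norm_ofNat, Complex.norm_real, norm_eq_abs,
    abs_of_pos pi_pos, Complex.norm_I, mul_one, Complex.norm_intCast]
  field_simp
  rw [sq_abs]

end Impurity

theorem fourier_impurity_lower_bound_general
    (a b : ℝ) (hab : a < b)
    (g : ℝ → ℝ) (hg_cont : ContinuousOn g (Set.Icc a b))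
    (c : ℤ → ℂ)
    (hc : ∀ k : ℤ, c k = (1 / (b - a) : ℝ) * ∫ s in a..b, (g s : ℂ) *
      Complex.exp (((-2 * π * (k : ℝ) * (s - a) / (b - a) : ℝ) : ℂ) * Complex.I))
    (sstar : ℝ)
    (hmax : ∀ s ∈ Set.Icc a b, uniformDelta a b g s ≤ uniformDelta a b g sstar) :
    (π ^ 2)⁻¹ * ∑' k : ℤ, (if k = 0 then 0 else ‖c k‖ ^ 2 / (k : ℝ) ^ 2) ≤
      uniformDelta a b g sstar := by
  set ξ : ℝ → ℂ := fun s => (uniformXi a b g s : ℂ)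
  have hparseval := hasSum_sq_fourierCoeffOn_uniformXi hab hg_cont
  have hterm : ∀ k : ℤ, (if k = 0 then 0 else ‖c k‖ ^ 2 / (k : ℝ) ^ 2) ≤
      (2 * π) ^ 2 * ‖fourierCoeffOn hab ξ k‖ ^ 2 := by
    intro k
    split_ifs with hk
    · positivity
    · rw [hc k, norm_shifted_fourierCoeffOn hab, sq_norm_fourierCoeffOn_uniformXi hab hg_cont hk]
  have hsummable : Summable fun k : ℤ => if k = 0 then 0 else ‖c k‖ ^ 2 / (k : ℝ) ^ 2 :=
    (hparseval.summable.mul_left _).of_nonneg_of_le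
      (fun k => by split_ifs <;> positivity) hterm
  calc (π ^ 2)⁻¹ * ∑' k : ℤ, (if k = 0 then 0 else ‖c k‖ ^ 2 / (k : ℝ) ^ 2)
      ≤ (π ^ 2)⁻¹ * ∑' k : ℤ, (2 * π) ^ 2 * ‖fourierCoeffOn hab ξ k‖ ^ 2 :=
        mul_le_mul_of_nonneg_left
          (hsummable.tsum_le_tsum hterm (hparseval.summable.mul_left _)) (by positivity)
    _ = 4 * ((b - a)⁻¹ * ∫ s in a..b, uniformXi a b g s ^ 2) := by
        rw [tsum_mul_left, hparseval.tsum_eq]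
        field_simp
        ring
    _ ≤ uniformDelta a b g sstar := four_mul_average_sq_uniformXi_le hab hg_cont hmax

/-- With the uniform density on `[a,b]` and Fourier coefficients
`c_k = (1/(b−a))∫_a^b g(s)e^{−2πik(s−a)/(b−a)} ds`, every best split `s*` satisfies
`Δ(s*) ≥ π^{−2} Σ_{k≠0} |c_k|²/k²`. -/
theorem fourier_impurity_lower_bound
    (a b : ℝ) (hab : a < b)
    (g : ℝ → ℝ) (hg_cont : ContinuousOn g (Set.Icc a b))
    (c : ℤ → ℂ)
    (hc : ∀ k : ℤ, c k = (1 / (b - a) : ℝ) * ∫ s in a..b, (g s : ℂ) *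
      Complex.exp (((-2 * π * (k : ℝ) * (s - a) / (b - a) : ℝ) : ℂ) * Complex.I))
    (sstar : ℝ) (hmem : sstar ∈ Set.Icc a b)
    (hmax : ∀ s ∈ Set.Icc a b, uniformDelta a b g s ≤ uniformDelta a b g sstar) :
    (π ^ 2)⁻¹ * ∑' k : ℤ, (if k = 0 then 0 else ‖c k‖ ^ 2 / (k : ℝ) ^ 2) ≤
      uniformDelta a b g sstar :=
  fourier_impurity_lower_bound_general a b hab g hg_cont c hc sstar hmax

end RegressionTree19
end
end
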